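/- Let P be a probabilistic term rewrite system and T a P-rewrite-sequence-tree of positive height with root term t such that every leaf term t_v is an instance C_v[tσ_v] of t inside some context. Then P is neither almost-surely terminating nor positively almost-surely terminating. -/

import Mathlib

/-- First-order terms over a signature `S` with variables `V`. -/
inductive Tm (S V : Type) : Type
  | var : V → Tm S V
  | app : S → List (Tm S V) → Tm S V

namespace Tm
variable {S V : Type}

/-- Applying a substitution `σ : V → Tm S V` homomorphically to a term. -/
def subst (σ : V → Tm S V) : Tm S V → Tm S V
  | var x => σ x
  | app f ts => app f (ts.attach.map fun u => subst σ u.1)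
decreasing_by
  have := List.sizeOf_lt_of_mem u.2
  simp only [Tm.app.sizeOf_spec]
  omega

/-- The variable `x` occurs in the term `t`. -/
inductive Occurs (x : V) : Tm S V → Prop
  | var : Occurs x (var x)
  | app {f : S} {ts : List (Tm S V)} {t : Tm S V} :
      t ∈ ts → Occurs x t → Occurs x (app f ts)

/-- `iter σ n t` is `t σⁿ`, the `n`-fold application of `σ` to `t`. -/
def iter (σ : V → Tm S V) (n : ℕ) (t : Tm S V) : Tm S V :=
  (subst σ)^[n] t

end Tm

namespace Tm
variable {S V : Type}

/-- The subterm of `t` at position `π`, if `π` is a position of `t`. -/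
def subtermAt : Tm S V → List ℕ → Option (Tm S V)
  | t, [] => some t
  | var _, _ :: _ => none
  | app _ [], _ :: _ => none
  | app _ (u :: _), 0 :: π => subtermAt u π
  | app f (_ :: ts), (i + 1) :: π => subtermAt (app f ts) (i :: π)

/-- `t` matches `s` at position `π`, i.e. `s = C[tσ]` with the hole of `C` at `π`. -/
def Matches (t s : Tm S V) (π : List ℕ) : Prop :=
  ∃ σ : V → Tm S V, subtermAt s π = some (subst σ t)

end Tm

open scoped ENNReal

/-- Nodes of a finitely-branching tree given by a branching function `nc`:
the node `v` (a position, i.e. list of child indices) is a node iff it is the root `[]`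
or `v = w ++ [i]` for a node `w` with `i < nc w`. -/
inductive IsNodeOf (nc : List ℕ → ℕ) : List ℕ → Prop
  | root : IsNodeOf nc []
  | child {v : List ℕ} {i : ℕ} : IsNodeOf nc v → i < nc v → IsNodeOf nc (v ++ [i])

/-- A (possibly infinite) rewrite sequence tree: every node `v` carries a probability
`prob v ∈ (0,1]` and an object `label v`; the root has probability `1`, and for every
inner node the probabilities of its children sum up to the probability of the node. -/
structure RST (A : Type) where
  nc : List ℕ → ℕ
  prob : List ℕ → ℝ≥0∞
  label : List ℕ → A
  prob_root : prob [] = 1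
  prob_pos : ∀ v, IsNodeOf nc v → 0 < prob v
  prob_le_one : ∀ v, IsNodeOf nc v → prob v ≤ 1
  prob_sum : ∀ v, IsNodeOf nc v → 0 < nc v →
      ∑ i ∈ Finset.range (nc v), prob (v ++ [i]) = prob v

namespace RST
variable {A : Type}

def IsNode (T : RST A) (v : List ℕ) : Prop := IsNodeOf T.nc v

def IsLeaf (T : RST A) (v : List ℕ) : Prop := T.IsNode v ∧ T.nc v = 0

/-- The termination probability `|T|`: the sum of the probabilities of all leaves. -/
noncomputable def termProb (T : RST A) : ℝ≥0∞ :=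
  ∑' v : {v : List ℕ // T.IsLeaf v}, T.prob v

/-- The expected derivation length `edl(T)`: `∞` if `|T| < 1`, and otherwise the sum
over all leaves `v` of `depth(v) · prob v` (the depth of a node is its list length). -/
noncomputable def edl (T : RST A) : ℝ≥0∞ :=
  if T.termProb < 1 then ⊤
  else ∑' v : {v : List ℕ // T.IsLeaf v}, (v.1.length : ℝ≥0∞) * T.prob v

end RST
variable {S V : Type}

/-- A probabilistic rewrite rule: a left-hand side which is not a variable, and a
finite multi-distribution of right-hand sides whose variables occur in the left-hand
side and whose probabilities are positive and sum to `1`. -/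
structure Rule (S V : Type) where
  lhs : Tm S V
  rhs : List (ℝ≥0∞ × Tm S V)
  lhs_not_var : ∀ x : V, lhs ≠ Tm.var x
  rhs_vars : ∀ pr ∈ rhs, ∀ x : V, Tm.Occurs x pr.2 → Tm.Occurs x lhs
  rhs_prob_pos : ∀ pr ∈ rhs, 0 < pr.1
  rhs_prob_sum : (rhs.map Prod.fst).sum = 1

/-- A probabilistic term rewrite system (PTRS): a finite set of probabilistic rules. -/
abbrev PTRS (S V : Type) := List (Rule S V)

/-- The probabilistic rewrite relation induced by a PTRS: `Rew P s l` means that `s`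
rewrites via `P` to the multi-distribution `l` (a rule applied with a matching
substitution at some position, i.e. under some context). -/
inductive Rew (P : PTRS S V) : Tm S V → List (ℝ≥0∞ × Tm S V) → Prop
  | rule {r : Rule S V} (σ : V → Tm S V) : r ∈ P →
      Rew P (Tm.subst σ r.lhs) (r.rhs.map fun pr => (pr.1, Tm.subst σ pr.2))
  | ctx {f : S} {ts₁ ts₂ : List (Tm S V)} {u : Tm S V} {l : List (ℝ≥0∞ × Tm S V)} :
      Rew P u l →
      Rew P (Tm.app f (ts₁ ++ u :: ts₂))
        (l.map fun pr => (pr.1, Tm.app f (ts₁ ++ pr.2 :: ts₂)))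

/-- `T` is a `P`-rewrite-sequence-tree: the edges of every inner node correspond to a
`P`-rewrite step of its term, the children carrying the respective probabilities. -/
def IsPRST (P : PTRS S V) (T : RST (Tm S V)) : Prop :=
  ∀ v, T.IsNode v → 0 < T.nc v →
    ∃ l : List (ℝ≥0∞ × Tm S V), Rew P (T.label v) l ∧ l.length = T.nc v ∧
      ∀ i < T.nc v,
        l[i]? = some (T.prob (v ++ [i]) / T.prob v, T.label (v ++ [i]))

/-- `P` is almost-surely terminating: every `P`-RST has termination probability `1`. -/
def AST (P : PTRS S V) : Prop :=
  ∀ T : RST (Tm S V), IsPRST P T → T.termProb = 1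

/-- `P` is positively almost-surely terminating: every `P`-RST has finite expected
derivation length. -/
def PAST (P : PTRS S V) : Prop :=
  ∀ T : RST (Tm S V), IsPRST P T → T.edl < ⊤

/-!
Glue a copy of `T` onto every leaf `v` of `T`: since `t_v = C_v[tσ_v]` and rewriting is closed
under substitutions and contexts, the map `u ↦ C_v[uσ_v]` turns the `P`-RST `T` rooted at `t` into
a `P`-RST rooted at `t_v`. Iterating the gluing forever gives a `P`-RST without leaves (every
node is an inner node of some copy of `T`, which has positive height), so its termination
probability is `0`: it witnesses failure of AST, and its expected derivation length is `∞`.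
-/

def PreservesRew (P : PTRS S V) (F : Tm S V → Tm S V) : Prop :=
  ∀ s l, Rew P s l → Rew P (F s) (l.map fun pr => (pr.1, F pr.2))

namespace PreservesRew
variable {P : PTRS S V}

theorem id : PreservesRew P fun s => s := by
  intro s l h
  simpa using h

theorem comp {F G : Tm S V → Tm S V} (hF : PreservesRew P F) (hG : PreservesRew P G) :
    PreservesRew P fun s => F (G s) := by
  intro s l h
  simpa [List.map_map, Function.comp_def] using hF _ _ (hG s l h)

theorem ctx (f : S) (ts₁ ts₂ : List (Tm S V)) :
    PreservesRew P fun u => Tm.app f (ts₁ ++ u :: ts₂) :=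
  fun _ _ h => Rew.ctx h

end PreservesRew

namespace Tm

theorem subst_app (σ : V → Tm S V) (f : S) (ts : List (Tm S V)) :
    subst σ (app f ts) = app f (ts.map (subst σ)) := by
  rw [subst]
  simp

theorem subst_subst (τ σ : V → Tm S V) : ∀ t : Tm S V,
    subst τ (subst σ t) = subst (fun x => subst τ (σ x)) t
  | var x => by simp [subst]
  | app f ts => by
      rw [subst_app, subst_app, subst_app, List.map_map]
      congr 1
      refine List.map_congr_left fun u hu => ?_
      have := List.sizeOf_lt_of_mem hu
      exact subst_subst τ σ u
decreasing_by
  simp only [Tm.app.sizeOf_spec]; omega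

theorem subtermAt_app_cons (f : S) (π : List ℕ) :
    ∀ (ts : List (Tm S V)) (i : ℕ),
      subtermAt (app f ts) (i :: π) = if h : i < ts.length then subtermAt ts[i] π else none
  | [], i => by simp [subtermAt]
  | t :: ts, 0 => by simp [subtermAt]
  | t :: ts, i + 1 => by simp [subtermAt, subtermAt_app_cons f π ts i]

end Tm

theorem preservesRew_subst (P : PTRS S V) (τ : V → Tm S V) : PreservesRew P (Tm.subst τ) := by
  intro s l h
  induction h with
  | @rule r σ hr =>
      have h' := Rew.rule (P := P) (fun x => Tm.subst τ (σ x)) hr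
      simp only [← Tm.subst_subst] at h'
      simpa [List.map_map, Function.comp_def] using h'
  | @ctx f ts₁ ts₂ u l' _ ih =>
      have h' := Rew.ctx (f := f) (ts₁ := ts₁.map (Tm.subst τ)) (ts₂ := ts₂.map (Tm.subst τ)) ih
      simpa [Tm.subst_app, List.map_map, Function.comp_def] using h'

theorem exists_preservesRew_of_subtermAt_eq (P : PTRS S V) :
    ∀ {π : List ℕ} {s w : Tm S V}, Tm.subtermAt s π = some w →
      ∃ F, PreservesRew P F ∧ F w = s
  | [], s, w, h => ⟨fun u => u, PreservesRew.id, by simpa [Tm.subtermAt] using h.symm⟩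
  | _ :: _, Tm.var _, _, h => by simp [Tm.subtermAt] at h
  | i :: π, Tm.app f ts, w, h => by
      rw [Tm.subtermAt_app_cons] at h
      split_ifs at h with hi
      obtain ⟨F, hF, hFw⟩ := exists_preservesRew_of_subtermAt_eq P h
      refine ⟨fun u => Tm.app f (ts.take i ++ F u :: ts.drop (i + 1)),
        (PreservesRew.ctx f _ _).comp hF, ?_⟩
      simp only [hFw, List.getElem_cons_drop, List.take_append_drop]

theorem Tm.Matches.exists_preservesRew (P : PTRS S V) {t s : Tm S V} {π : List ℕ}
    (h : Tm.Matches t s π) : ∃ F, PreservesRew P F ∧ F t = s := by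
  obtain ⟨σ, hσ⟩ := h
  obtain ⟨F, hF, hFs⟩ := exists_preservesRew_of_subtermAt_eq P hσ
  exact ⟨fun u => F (Tm.subst σ u), hF.comp (preservesRew_subst P σ), hFs⟩

/-- A node of the glued tree: the node `pos` of a copy of `T`
placed in the context `ctx`, reached with probability `weight` at the root of that copy. -/
structure GlueState (S V : Type) where
  weight : ℝ≥0∞
  ctx : Tm S V → Tm S V
  pos : List ℕ

namespace GlueState
variable (T : RST (Tm S V)) (E : List ℕ → Tm S V → Tm S V)

noncomputable def prob (s : GlueState S V) : ℝ≥0∞ := s.weight * T.prob s.pos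

def label (s : GlueState S V) : Tm S V := s.ctx (T.label s.pos)

/-- At a leaf `w` of the current copy, continue with a fresh copy of `T` placed by `E w`. -/
noncomputable def restart (s : GlueState S V) : GlueState S V :=
  if T.nc s.pos = 0 then ⟨s.weight * T.prob s.pos, fun t => s.ctx (E s.pos t), []⟩ else s

noncomputable def child (i : ℕ) (s : GlueState S V) : GlueState S V :=
  restart T E { s with pos := s.pos ++ [i] }

noncomputable def ofNode (v : List ℕ) : GlueState S V :=
  v.foldl (fun s i => child T E i s) ⟨1, fun t => t, []⟩

theorem ofNode_nil : ofNode T E [] = ⟨1, fun t => t, []⟩ := rfl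

theorem ofNode_append_singleton (v : List ℕ) (i : ℕ) :
    ofNode T E (v ++ [i]) = child T E i (ofNode T E v) :=
  List.foldl_append ..

theorem prob_restart (s : GlueState S V) : (restart T E s).prob T = s.prob T := by
  unfold restart prob
  split_ifs <;> simp [T.prob_root]

theorem prob_child (i : ℕ) (s : GlueState S V) :
    (child T E i s).prob T = s.weight * T.prob (s.pos ++ [i]) :=
  prob_restart T E _

theorem nc_pos_restart (hroot : 0 < T.nc []) (s : GlueState S V) :
    0 < T.nc (restart T E s).pos := by
  unfold restart
  split_ifs with h
  · exact hroot
  · exact Nat.pos_of_ne_zero h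

theorem nc_pos_ofNode (hroot : 0 < T.nc []) (v : List ℕ) : 0 < T.nc (ofNode T E v).pos := by
  rcases List.eq_nil_or_concat v with rfl | ⟨v, i, rfl⟩
  · exact hroot
  · rw [List.concat_eq_append, ofNode_append_singleton]
    exact nc_pos_restart T E hroot _

variable {T E}

theorem label_restart (hE : ∀ w, T.IsLeaf w → E w (T.label []) = T.label w)
    {s : GlueState S V} (hs : T.IsNode s.pos) : (restart T E s).label T = s.label T := by
  unfold restart label
  split_ifs with h
  · simp only [hE _ ⟨hs, h⟩]
  · rfl

theorem label_child (hE : ∀ w, T.IsLeaf w → E w (T.label []) = T.label w)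
    {s : GlueState S V} (hs : T.IsNode s.pos) {i : ℕ} (hi : i < T.nc s.pos) :
    (child T E i s).label T = s.ctx (T.label (s.pos ++ [i])) :=
  label_restart hE (IsNodeOf.child hs hi)

theorem preservesRew_ctx_ofNode {P : PTRS S V} (hE : ∀ w, PreservesRew P (E w)) :
    ∀ v, PreservesRew P (ofNode T E v).ctx := by
  intro v
  induction v using List.reverseRecOn with
  | nil => exact PreservesRew.id
  | append_singleton v i ih =>
      rw [ofNode_append_singleton]
      unfold child restart
      split_ifs
      · exact ih.comp (hE _)
      · exact ih

structure Valid (T : RST (Tm S V)) (s : GlueState S V) : Prop where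
  weight_pos : 0 < s.weight
  weight_le_one : s.weight ≤ 1
  isNode : T.IsNode s.pos

theorem Valid.restart {s : GlueState S V} (hs : Valid T s) : Valid T (restart T E s) := by
  unfold GlueState.restart
  split_ifs
  · exact ⟨ENNReal.mul_pos hs.weight_pos.ne' (T.prob_pos _ hs.isNode).ne',
      mul_le_one' hs.weight_le_one (T.prob_le_one _ hs.isNode), IsNodeOf.root⟩
  · exact hs

theorem Valid.child {s : GlueState S V} (hs : Valid T s) {i : ℕ} (hi : i < T.nc s.pos) :
    Valid T (child T E i s) :=
  Valid.restart ⟨hs.weight_pos, hs.weight_le_one, IsNodeOf.child hs.isNode hi⟩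

theorem Valid.prob_pos {s : GlueState S V} (hs : Valid T s) : 0 < s.prob T :=
  ENNReal.mul_pos hs.weight_pos.ne' (T.prob_pos _ hs.isNode).ne'

theorem Valid.prob_le_one {s : GlueState S V} (hs : Valid T s) : s.prob T ≤ 1 :=
  mul_le_one' hs.weight_le_one (T.prob_le_one _ hs.isNode)

theorem valid_ofNode {v : List ℕ} (hv : IsNodeOf (fun v => T.nc (ofNode T E v).pos) v) :
    Valid T (ofNode T E v) := by
  induction hv with
  | root => exact ⟨one_pos, le_rfl, IsNodeOf.root⟩
  | child _ hi ih =>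
      rw [ofNode_append_singleton]
      exact ih.child hi

end GlueState

open GlueState in
/-- The tree obtained from `T` by replacing every leaf `w` by a copy of `T` placed by `E w`,
and so on indefinitely. -/
@[simps]
noncomputable def RST.glue (T : RST (Tm S V)) (E : List ℕ → Tm S V → Tm S V) : RST (Tm S V) where
  nc v := T.nc (ofNode T E v).pos
  prob v := (ofNode T E v).prob T
  label v := (ofNode T E v).label T
  prob_root := by simp [ofNode_nil, GlueState.prob, T.prob_root]
  prob_pos v hv := (valid_ofNode hv).prob_pos
  prob_le_one v hv := (valid_ofNode hv).prob_le_one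
  prob_sum v hv _ := by
    simp only [ofNode_append_singleton, prob_child, ← Finset.mul_sum]
    rw [T.prob_sum _ (valid_ofNode hv).isNode ‹_›]
    rfl

namespace RST
variable {T : RST (Tm S V)} {E : List ℕ → Tm S V → Tm S V}

open GlueState

theorem not_isLeaf_glue (hroot : 0 < T.nc []) (v : List ℕ) : ¬ (T.glue E).IsLeaf v :=
  fun hv => (nc_pos_ofNode T E hroot v).ne' hv.2

theorem isPRST_glue {P : PTRS S V} (hT : IsPRST P T) (hE : ∀ w, PreservesRew P (E w))
    (hEleaf : ∀ w, T.IsLeaf w → E w (T.label []) = T.label w) : IsPRST P (T.glue E) := by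
  intro v hv hpos
  have hs := valid_ofNode hv
  obtain ⟨l, hrew, hlen, hget⟩ := hT _ hs.isNode hpos
  refine ⟨l.map fun pr => (pr.1, (ofNode T E v).ctx pr.2), ?_, by rw [List.length_map, hlen]; rfl,
    fun i hi => ?_⟩
  · exact preservesRew_ctx_ofNode hE v _ _ hrew
  have hprob : (T.glue E).prob (v ++ [i]) / (T.glue E).prob v
      = T.prob ((ofNode T E v).pos ++ [i]) / T.prob (ofNode T E v).pos := by
    rw [glue_prob, glue_prob, ofNode_append_singleton, prob_child, GlueState.prob]
    exact ENNReal.mul_div_mul_left _ _ hs.weight_pos.ne'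
      (hs.weight_le_one.trans_lt ENNReal.one_lt_top).ne
  have hlabel : (T.glue E).label (v ++ [i]) = (ofNode T E v).ctx (T.label ((ofNode T E v).pos ++ [i])) := by
    rw [glue_label, ofNode_append_singleton]
    exact label_child hEleaf hs.isNode hi
  rw [List.getElem?_map, hget i hi, Option.map_some, hprob, hlabel]

end RST

theorem exists_isPRST_forall_not_isLeaf {P : PTRS S V} {T : RST (Tm S V)} (hT : IsPRST P T)
    (hroot : 0 < T.nc [])
    (hleaf : ∀ w, T.IsLeaf w → ∃ F, PreservesRew P F ∧ F (T.label []) = T.label w) :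
    ∃ T' : RST (Tm S V), IsPRST P T' ∧ ∀ v, ¬ T'.IsLeaf v := by
  have : ∀ w, ∃ F, PreservesRew P F ∧ (T.IsLeaf w → F (T.label []) = T.label w) := by
    intro w
    by_cases hw : T.IsLeaf w
    · obtain ⟨F, hF, hFw⟩ := hleaf w hw
      exact ⟨F, hF, fun _ => hFw⟩
    · exact ⟨fun t => t, PreservesRew.id, fun h => absurd h hw⟩
  choose E hE hEleaf using this
  exact ⟨T.glue E, RST.isPRST_glue hT hE hEleaf, RST.not_isLeaf_glue hroot⟩

theorem RST.termProb_eq_zero_of_forall_not_isLeaf {A : Type} {T : RST A}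
    (h : ∀ v, ¬ T.IsLeaf v) : T.termProb = 0 := by
  have : IsEmpty {v : List ℕ // T.IsLeaf v} := ⟨fun v => h v.1 v.2⟩
  exact tsum_empty

theorem not_AST_of_termProb_lt_one {P : PTRS S V} {T : RST (Tm S V)} (hT : IsPRST P T)
    (h : T.termProb < 1) : ¬ AST P :=
  fun hP => h.ne (hP T hT)

theorem not_PAST_of_termProb_lt_one {P : PTRS S V} {T : RST (Tm S V)} (hT : IsPRST P T)
    (h : T.termProb < 1) : ¬ PAST P := by
  intro hP
  have := hP T hT
  rw [RST.edl, if_pos h] at this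
  exact this.false

/-- If `T` is a `P`-RST of positive height with root term `t` such that every leaf term
is of the form `C[tσ]` (an instance of `t` inside some context), then `P` is neither
almost-surely terminating nor positively almost-surely terminating. -/
theorem not_AST_not_PAST_of_looping_RST {S V : Type} (P : PTRS S V)
    (T : RST (Tm S V)) (hT : IsPRST P T) (hheight : 0 < T.nc [])
    (hloop : ∀ v, T.IsLeaf v →
      ∃ π : List ℕ, Tm.Matches (T.label []) (T.label v) π) :
    ¬ AST P ∧ ¬ PAST P := by
  obtain ⟨T', hT', hnoLeaf⟩ := exists_isPRST_forall_not_isLeaf hT hheight fun w hw =>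
    (hloop w hw).elim fun _ hπ => hπ.exists_preservesRew P
  have hterm : T'.termProb < 1 := by
    rw [RST.termProb_eq_zero_of_forall_not_isLeaf hnoLeaf]
    exact zero_lt_one
  exact ⟨not_AST_of_termProb_lt_one hT' hterm, not_PAST_of_termProb_lt_one hT' hterm⟩
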